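/- Let Y be a finite connected simple graph. Then Y is bipartite if and only if κ(Y) is odd, where κ(Y) is the number of κ-equivalence classes of acyclic orientations of Y. -/

import Mathlib

/-- An orientation of a simple graph: a choice of direction for each edge. -/
structure GraphOrientation {V : Type*} (G : SimpleGraph V) where
  dir : V → V → Prop
  consistent : ∀ u v, G.Adj u v ↔ (dir u v ∨ dir v u)
  asymm : ∀ u v, dir u v → ¬ dir v u

/-- An orientation is acyclic if its directed graph has no directed cycle. -/
def GraphOrientation.IsAcyclic {V : Type*} {G : SimpleGraph V} (O : GraphOrientation G) : Prop :=
  ∀ v, ¬ Relation.TransGen O.dir v v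

/-- The type of acyclic orientations of `G`. -/
def AcycGraphOrientation {V : Type*} (G : SimpleGraph V) := {O : GraphOrientation G // O.IsAcyclic}

/-- `Click O O'` holds when `O'` is obtained from `O` by a source-to-sink operation:
reversing all edges incident to some source vertex `v`. -/
def Click {V : Type*} {G : SimpleGraph V} (O O' : GraphOrientation G) : Prop :=
  ∃ v, (∀ u, ¬ O.dir u v) ∧
    ∀ u w, O'.dir u w ↔ (((u = v ∨ w = v) ∧ O.dir w u) ∨ (u ≠ v ∧ w ≠ v ∧ O.dir u w))

/-- κ(G): the number of equivalence classes of acyclic orientations of `G` under the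
equivalence generated by source-to-sink operations. -/
noncomputable def kappa {V : Type*} (G : SimpleGraph V) : ℕ :=
  Nat.card (Quot (fun A B : AcycGraphOrientation G => Click A.1 B.1))

/-!
Reversing all edges maps a source-to-sink move at `v` to the inverse move at `v`, so it induces
an involution on κ-classes and κ(Y) is congruent mod 2 to the number of fixed classes. The
circulation of a closed walk (edges traversed forwards minus edges traversed backwards) is
invariant under source-to-sink moves and changes sign under reversal, so the orientations in a
fixed class have zero circulation: they are graded, `u → v` implying `f v = f u + 1` for a height
function `f`. A graded orientation exists iff `Y` is bipartite (take `f` to be a 2-colouring;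
conversely `f mod 2` is one). Any two graded orientations are equivalent: flipping a lowest
vertex that is below its target height raises it by 2, and a constant shift of the target heights
makes them lie above the current ones by even amounts. Hence there is exactly one fixed class if
`Y` is bipartite and none otherwise.
-/

theorem Function.Involutive.card_modEq_card_fixedPoints {α : Type*} [Finite α] {f : α → α}
    (hf : Involutive f) : Nat.card α ≡ Nat.card (Function.fixedPoints f) [MOD 2] := by
  classical
  have := Fintype.ofFinite α
  rw [Nat.card_eq_fintype_card, Nat.card_eq_fintype_card]
  exact Equiv.Perm.card_fixedPoints_modEq (f := f) (p := 2) (n := 1) (funext hf)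

lemma SimpleGraph.Preconnected.iff_of_adj {V : Type*} {G : SimpleGraph V} (hG : G.Preconnected)
    {P : V → Prop} (hP : ∀ ⦃u v⦄, G.Adj u v → (P u ↔ P v)) (u v : V) : P u ↔ P v := by
  obtain ⟨p⟩ := hG u v
  induction p with
  | nil => rfl
  | cons h _ ih => exact (hP h).trans ih

open Relation SimpleGraph

namespace GraphOrientation

variable {V : Type*} {G : SimpleGraph V}

@[ext] lemma ext {O O' : GraphOrientation G} (h : O.dir = O'.dir) : O = O' := by
  cases O; cases O'; congr

instance [Finite V] : Finite (GraphOrientation G) :=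
  Finite.of_injective dir fun _ _ => ext

lemma adj_of_dir (O : GraphOrientation G) {u v : V} (h : O.dir u v) : G.Adj u v :=
  (O.consistent u v).2 (Or.inl h)

def reverse (O : GraphOrientation G) : GraphOrientation G where
  dir u v := O.dir v u
  consistent u v := by rw [G.adj_comm, O.consistent, or_comm]
  asymm u v h h' := O.asymm v u h h'

@[simp] lemma reverse_dir (O : GraphOrientation G) (u v : V) : O.reverse.dir u v ↔ O.dir v u :=
  Iff.rfl

lemma IsAcyclic.reverse {O : GraphOrientation G} (h : O.IsAcyclic) : O.reverse.IsAcyclic :=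
  fun v hv => h v (transGen_swap.mp hv)

/-- Reverse every edge at `v`. -/
def flipAt (O : GraphOrientation G) (v : V) : GraphOrientation G where
  dir u w := ((u = v ∨ w = v) ∧ O.dir w u) ∨ (u ≠ v ∧ w ≠ v ∧ O.dir u w)
  consistent u w := by
    rw [O.consistent]
    by_cases hu : u = v <;> by_cases hw : w = v <;> simp [hu, hw, or_comm]
  asymm u w := by
    have := O.asymm u w
    have := O.asymm w u
    tauto

lemma click_flipAt {O : GraphOrientation G} {v : V} (hv : ∀ u, ¬ O.dir u v) :
    Click O (O.flipAt v) :=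
  ⟨v, hv, fun _ _ => Iff.rfl⟩

lemma _root_.Click.eq_flipAt {O O' : GraphOrientation G} (h : Click O O') :
    ∃ v, (∀ u, ¬ O.dir u v) ∧ O' = O.flipAt v := by
  obtain ⟨v, hv, hO'⟩ := h
  exact ⟨v, hv, ext (funext₂ fun u w => propext (hO' u w))⟩

lemma _root_.Click.reverse {O O' : GraphOrientation G} (h : Click O O') :
    Click O'.reverse O.reverse := by
  obtain ⟨v, hv, rfl⟩ := h.eq_flipAt
  refine ⟨v, fun u h => ?_, fun u w => ?_⟩
  · simp only [reverse_dir, flipAt] at h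
    tauto
  · simp only [reverse_dir, flipAt]
    by_cases hu : u = v <;> by_cases hw : w = v <;> simp [hu, hw]

def IsGradedBy (O : GraphOrientation G) (f : V → ℤ) : Prop :=
  ∀ ⦃u v⦄, O.dir u v → f v = f u + 1

namespace IsGradedBy

variable {O O' : GraphOrientation G} {f : V → ℤ}

lemma isAcyclic (h : O.IsGradedBy f) : O.IsAcyclic := by
  have hlt : ∀ {u v}, TransGen O.dir u v → f u < f v := fun huv => by
    induction huv with
    | single huv => linarith [h huv]
    | tail _ hvw ih => linarith [h hvw]
  exact fun v hv => (hlt hv).false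

lemma adj (h : O.IsGradedBy f) {u v : V} (huv : G.Adj u v) : f v = f u + 1 ∨ f u = f v + 1 :=
  ((O.consistent u v).1 huv).imp (@h u v) (@h v u)

lemma unique (h : O.IsGradedBy f) (h' : O'.IsGradedBy f) : O = O' := by
  have key : ∀ {O O' : GraphOrientation G}, O.IsGradedBy f → O'.IsGradedBy f →
      ∀ u v, O.dir u v → O'.dir u v := fun {O O'} h h' u v huv => by
    rcases (O'.consistent u v).1 (O.adj_of_dir huv) with h'uv | h'vu
    · exact h'uv
    · linarith [h huv, h' h'vu]
  ext u v
  exact ⟨key h h' u v, key h' h u v⟩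

lemma add_const (h : O.IsGradedBy f) (c : ℤ) : O.IsGradedBy (fun x => f x + c) :=
  fun _ _ huv => by simp only [h huv]; ring

lemma reverse (h : O.IsGradedBy f) : O.reverse.IsGradedBy (-f) :=
  fun _ _ huv => by simp [h huv]

lemma flipAt [DecidableEq V] (h : O.IsGradedBy f) {v : V} (hv : ∀ u, ¬ O.dir u v) :
    (O.flipAt v).IsGradedBy (f + Pi.single v 2) := by
  rintro u w (⟨rfl | rfl, hwu⟩ | ⟨hu, hw, huw⟩)
  · exact absurd hwu (hv w)
  · have hu : u ≠ w := (O.adj_of_dir hwu).ne.symm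
    simp only [Pi.add_apply, Pi.single_eq_same, h hwu, Pi.single_eq_of_ne hu, add_zero]
    ring
  · simp [hu, hw, h huw]

lemma exists_source_of_lt [Finite V] (hO : O.IsGradedBy f) {g : V → ℤ}
    (hO' : O'.IsGradedBy g) (hlt : f < g) : ∃ v, f v < g v ∧ ∀ u, ¬ O.dir u v := by
  obtain ⟨hle, hS⟩ := Pi.lt_def.1 hlt
  -- a lowest vertex that is still below its target height
  obtain ⟨v, hv, hmin⟩ := Set.exists_min_image {x | f x < g x} f (Set.toFinite _) hS
  refine ⟨v, hv, fun u huv => ?_⟩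
  have hfuv := hO huv
  have hu : g u = f u := by
    by_contra hu
    have := hmin u (lt_of_le_of_ne (hle u) (Ne.symm hu))
    omega
  have hv : f v < g v := hv
  rcases hO'.adj (O.adj_of_dir huv) with h | h <;> omega

end IsGradedBy

open Classical in
noncomputable def edgeSign (O : GraphOrientation G) (u v : V) : ℤ := if O.dir u v then 1 else -1

noncomputable def circulation (O : GraphOrientation G) : {u v : V} → G.Walk u v → ℤ
  | _, _, .nil => 0
  | _, _, .cons (u := a) (v := b) _ p => O.edgeSign a b + O.circulation p

section Circulation

variable (O : GraphOrientation G)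

@[simp] lemma circulation_nil {u : V} : O.circulation (.nil : G.Walk u u) = 0 := rfl

@[simp] lemma circulation_cons {u v w : V} (h : G.Adj u v) (p : G.Walk v w) :
    O.circulation (.cons h p) = O.edgeSign u v + O.circulation p := rfl

lemma edgeSign_swap {u v : V} (h : G.Adj u v) : O.edgeSign v u = -O.edgeSign u v := by
  rcases (O.consistent u v).1 h with huv | hvu
  · simp [edgeSign, huv, O.asymm u v huv]
  · simp [edgeSign, hvu, O.asymm v u hvu]

lemma edgeSign_reverse (u v : V) : O.reverse.edgeSign u v = O.edgeSign v u := rfl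

lemma circulation_append {u v w : V} (p : G.Walk u v) (q : G.Walk v w) :
    O.circulation (p.append q) = O.circulation p + O.circulation q := by
  induction p with
  | nil => simp
  | cons h p ih => simp [ih, add_assoc]

lemma circulation_reverse_walk {u v : V} (p : G.Walk u v) :
    O.circulation p.reverse = -O.circulation p := by
  induction p with
  | nil => simp
  | cons h p ih => simp [circulation_append, ih, O.edgeSign_swap h, add_comm]

lemma circulation_reverse {u v : V} (p : G.Walk u v) :
    O.reverse.circulation p = -O.circulation p := by
  induction p with
  | nil => simp
  | cons h p ih => simp [ih, edgeSign_reverse, O.edgeSign_swap h, add_comm]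

variable {O} [DecidableEq V]

lemma edgeSign_flipAt {v : V} (hv : ∀ u, ¬ O.dir u v) {x y : V} (h : G.Adj x y) :
    (O.flipAt v).edgeSign x y =
      O.edgeSign x y + (if y = v then 2 else 0) - (if x = v then 2 else 0) := by
  rcases (O.consistent x y).1 h with hxy | hyx
  · have hy : y ≠ v := fun e => hv x (e ▸ hxy)
    by_cases hx : x = v
    · subst hx
      simp [edgeSign, flipAt, hxy, O.asymm x y hxy, hy]
    · simp [edgeSign, flipAt, hxy, hx, hy]
  · have hx : x ≠ v := fun e => hv y (e ▸ hyx)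
    by_cases hy : y = v
    · subst hy
      simp [edgeSign, flipAt, hyx, O.asymm y x hyx, hx]
    · simp [edgeSign, flipAt, hyx, O.asymm y x hyx, hx, hy]

lemma circulation_flipAt {v : V} (hv : ∀ u, ¬ O.dir u v) {a b : V} (p : G.Walk a b) :
    (O.flipAt v).circulation p =
      O.circulation p + (if b = v then 2 else 0) - (if a = v then 2 else 0) := by
  induction p with
  | nil => simp
  | cons h p ih => rw [circulation_cons, circulation_cons, ih, edgeSign_flipAt hv h]; ring

end Circulation

lemma _root_.Click.circulation_eq {O O' : GraphOrientation G} (h : Click O O') {a : V}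
    (p : G.Walk a a) : O'.circulation p = O.circulation p := by
  classical
  obtain ⟨v, hv, rfl⟩ := h.eq_flipAt
  simp [circulation_flipAt hv]

lemma exists_isGradedBy_of_circulation_eq_zero (hG : G.Preconnected) {O : GraphOrientation G}
    (h : ∀ (a : V) (p : G.Walk a a), O.circulation p = 0) : ∃ f : V → ℤ, O.IsGradedBy f := by
  rcases isEmpty_or_nonempty V with hV | ⟨⟨b⟩⟩
  · exact ⟨0, fun u => isEmptyElim u⟩
  refine ⟨fun x => O.circulation (hG b x).some, fun u v huv => ?_⟩
  have hloop := h b (((hG b u).some.append (.cons (O.adj_of_dir huv) .nil)).append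
    (hG b v).some.reverse)
  simp only [circulation_append, circulation_reverse_walk, circulation_cons, circulation_nil,
    edgeSign, if_pos huv] at hloop
  linarith

def ofTwoColoring (c : G.Coloring (Fin 2)) : GraphOrientation G where
  dir u v := G.Adj u v ∧ c u = 0
  consistent u v := by
    refine ⟨fun h => ?_, by rintro (⟨h, -⟩ | ⟨h, -⟩) <;> [exact h; exact h.symm]⟩
    have := c.valid h
    by_cases hu : c u = 0
    · exact .inl ⟨h, hu⟩
    · exact .inr ⟨h.symm, by omega⟩
  asymm u v := by
    rintro ⟨h, hu⟩ ⟨-, hv⟩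
    exact c.valid h (hu.trans hv.symm)

lemma isGradedBy_ofTwoColoring (c : G.Coloring (Fin 2)) :
    (ofTwoColoring c).IsGradedBy fun x => (c x : ℤ) := by
  rintro u v ⟨h, hu⟩
  have := c.valid h
  simp only
  omega

lemma _root_.SimpleGraph.colorable_two_iff_exists_isGradedBy :
    G.Colorable 2 ↔ ∃ (O : GraphOrientation G) (f : V → ℤ), O.IsGradedBy f := by
  refine ⟨fun ⟨c⟩ => ⟨_, _, isGradedBy_ofTwoColoring c⟩, fun ⟨O, f, hf⟩ => ?_⟩
  have hcol : G.Coloring (ZMod 2) := Coloring.mk (fun x => (f x : ZMod 2)) fun {u v} huv heq => by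
    rcases hf.adj huv with h | h <;>
      · rw [h] at heq
        push_cast at heq
        simp at heq
  simpa using hcol.colorable

end GraphOrientation

section

variable {V : Type*} {G : SimpleGraph V}

instance [Finite V] : Finite (AcycGraphOrientation G) :=
  inferInstanceAs (Finite {O : GraphOrientation G // O.IsAcyclic})

def AcycGraphOrientation.reverse (A : AcycGraphOrientation G) : AcycGraphOrientation G :=
  ⟨A.1.reverse, A.2.reverse⟩

/-- The κ-classes of acyclic orientations, so that `kappa G = Nat.card (KappaClass G)`. -/
abbrev KappaClass (G : SimpleGraph V) := Quot fun A B : AcycGraphOrientation G => Click A.1 B.1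

namespace KappaClass

/-- A source-to-sink move `A → B` reverses to a move `B.reverse → A.reverse`. -/
def reverse : KappaClass G → KappaClass G :=
  Quot.lift (fun A => Quot.mk _ A.reverse) fun A B h =>
    (Quot.sound h.reverse : (Quot.mk _ B.reverse : KappaClass G) = Quot.mk _ A.reverse).symm

lemma reverse_involutive : Function.Involutive (reverse (G := G)) := by
  rintro ⟨A⟩
  rfl

lemma circulation_eq_of_mk_eq {A B : AcycGraphOrientation G}
    (h : (Quot.mk _ A : KappaClass G) = Quot.mk _ B) {a : V} (p : G.Walk a a) :
    A.1.circulation p = B.1.circulation p :=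
  congrArg (Quot.lift (fun A : AcycGraphOrientation G => A.1.circulation p)
    fun _ _ hAB => (hAB.circulation_eq p).symm) h

lemma mk_eq_mk_of_isGradedBy_of_le [Fintype V] {A B : AcycGraphOrientation G} {f g : V → ℤ}
    (hA : A.1.IsGradedBy f) (hB : B.1.IsGradedBy g) (hle : f ≤ g)
    (heven : ∀ x, Even (g x - f x)) : (Quot.mk _ A : KappaClass G) = Quot.mk _ B := by
  classical
  by_cases hfg : f = g
  · subst hfg
    rw [Subtype.ext (hA.unique hB)]
  obtain ⟨v, hv, hsrc⟩ := hA.exists_source_of_lt hB (lt_of_le_of_ne hle hfg)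
  have hA' := hA.flipAt hsrc
  have hle' : f + Pi.single v 2 ≤ g := by
    intro x
    by_cases hx : x = v
    · subst hx
      obtain ⟨k, hk⟩ := heven x
      simp only [Pi.add_apply, Pi.single_eq_same]
      omega
    · simp [hx, hle x]
  have hsum : ∑ x, (g x - (f + Pi.single v 2 : V → ℤ) x) = ∑ x, (g x - f x) - 2 := by
    simp only [Pi.add_apply, Finset.sum_sub_distrib, Finset.sum_add_distrib,
      Finset.sum_pi_single', Finset.mem_univ, if_true]
    ring
  have hpos : 0 ≤ ∑ x, (g x - (f + Pi.single v 2 : V → ℤ) x) :=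
    Finset.sum_nonneg fun x _ => sub_nonneg.2 (hle' x)
  calc Quot.mk _ A = Quot.mk _ ⟨A.1.flipAt v, hA'.isAcyclic⟩ :=
        Quot.sound (GraphOrientation.click_flipAt hsrc)
    _ = Quot.mk _ B := mk_eq_mk_of_isGradedBy_of_le hA' hB hle' fun x => by
        by_cases hx : x = v
        · subst hx
          simpa [sub_add_eq_sub_sub, Int.even_sub] using heven x
        · simpa [hx] using heven x
termination_by (∑ x, (g x - f x)).toNat
decreasing_by omega

lemma mk_eq_mk_of_isGradedBy [Fintype V] (hG : G.Preconnected) {A B : AcycGraphOrientation G}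
    {f g : V → ℤ} (hA : A.1.IsGradedBy f) (hB : B.1.IsGradedBy g) :
    (Quot.mk _ A : KappaClass G) = Quot.mk _ B := by
  -- `g - f` has constant parity, so a constant shift of `g` lies above `f` by even amounts
  have hpar : ∀ x y, Even (g x - f x) ↔ Even (g y - f y) := hG.iff_of_adj fun u v huv => by
    rcases hA.adj huv with hf | hf <;> rcases hB.adj huv with hg | hg <;>
      simp only [Int.even_iff] <;> omega
  let c : ℤ := if ∀ x, Even (g x - f x) then 0 else 1
  have hc : ∀ x, Even (g x - f x + c) := fun x => by
    by_cases hall : ∀ x, Even (g x - f x)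
    · simpa [c, if_pos hall] using hall x
    · obtain ⟨y, hy⟩ := not_forall.1 hall
      simpa [c, hall, Int.even_add_one] using (hpar x y).not.2 hy
  have hc0 : 0 ≤ c := by positivity
  let N := ∑ x, |g x - f x|
  refine mk_eq_mk_of_isGradedBy_of_le hA (hB.add_const (c + 2 * N)) (fun x => ?_) fun x => ?_
  · have hN : |g x - f x| ≤ N := Finset.single_le_sum (fun y _ => abs_nonneg (g y - f y))
      (Finset.mem_univ x)
    have := neg_abs_le (g x - f x)
    have := abs_nonneg (g x - f x)
    simp only
    linarith
  · rw [show g x + (c + 2 * N) - f x = g x - f x + c + 2 * N by ring]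
    exact (hc x).add (even_two_mul N)

lemma reverse_mk_eq_iff [Fintype V] (hG : G.Preconnected) {A : AcycGraphOrientation G} :
    reverse (Quot.mk _ A) = Quot.mk _ A ↔ ∃ f : V → ℤ, A.1.IsGradedBy f := by
  refine ⟨fun h => GraphOrientation.exists_isGradedBy_of_circulation_eq_zero hG fun a p => ?_,
    fun ⟨f, hf⟩ => mk_eq_mk_of_isGradedBy hG hf.reverse hf⟩
  have := circulation_eq_of_mk_eq h p
  rw [AcycGraphOrientation.reverse, GraphOrientation.circulation_reverse] at this
  linarith

open Classical in
lemma card_fixedPoints_reverse [Fintype V] (hG : G.Preconnected) :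
    Nat.card (Function.fixedPoints (reverse (G := G))) = if G.Colorable 2 then 1 else 0 := by
  split_ifs with hcol
  · obtain ⟨O, f, hf⟩ := colorable_two_iff_exists_isGradedBy.1 hcol
    refine Nat.card_eq_one_iff_exists.2
      ⟨⟨Quot.mk _ ⟨O, hf.isAcyclic⟩, (reverse_mk_eq_iff hG).2 ⟨f, hf⟩⟩, ?_⟩
    rintro ⟨⟨B⟩, hB⟩
    obtain ⟨g, hg⟩ := (reverse_mk_eq_iff hG).1 hB
    exact Subtype.ext (mk_eq_mk_of_isGradedBy hG hg hf)
  · refine Nat.card_eq_zero.2 (.inl ⟨?_⟩)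
    rintro ⟨⟨B⟩, hB⟩
    obtain ⟨g, hg⟩ := (reverse_mk_eq_iff hG).1 hB
    exact hcol (colorable_two_iff_exists_isGradedBy.2 ⟨_, _, hg⟩)

end KappaClass

end

theorem bipartite_iff_kappa_odd {V : Type*} [Fintype V] (G : SimpleGraph V)
    (hconn : G.Connected) : G.Colorable 2 ↔ Odd (kappa G) := by
  have hmod : kappa G ≡ Nat.card (Function.fixedPoints (KappaClass.reverse (G := G))) [MOD 2] :=
    KappaClass.reverse_involutive.card_modEq_card_fixedPoints
  rw [KappaClass.card_fixedPoints_reverse hconn.preconnected] at hmod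
  rw [Nat.odd_iff]
  split_ifs at hmod with hcol <;> simp only [Nat.ModEq] at hmod <;> simp [hcol, hmod]
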